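/- arXiv:1705.10528 — 2 statements merged into one kernel-verified Lean document; each statement's English description precedes it below -/
import Mathlib

section
/- (Strong duality for the linear objective with linear and quadratic constraints.) Let g, b ∈ ℝⁿ, c ∈ ℝ, δ > 0, and let H be a symmetric positive-definite n×n real matrix. Define q = gᵀH⁻¹g, r = gᵀH⁻¹b, s = bᵀH⁻¹b. If there exists a strictly feasible point (some x with bᵀx + c < 0 and xᵀHx < δ), then the optimal value p* = min { gᵀx : bᵀx + c ≤ 0, xᵀHx ≤ δ } equals max_{λ ≥ 0, ν ≥ 0} [ -(1/(2λ))(q + 2νr + ν²s) + νc - λδ/2 ]. -/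
/-!
Completing the square in the `H`-norm gives, for `λ > 0` and `u = g + νb`,
`2λ (gᵀx - d(λ, ν)) = ‖λx + H⁻¹u‖²_H + λ² (δ - xᵀHx) - 2λν (bᵀx + c)`,
which yields weak duality at once and equality at `x = -H⁻¹u / λ` under complementary
slackness. Strong duality then reduces to finding KKT multipliers for the scalars
`q, r, s`: either the trust region alone is active (`ν = 0`, `λ² δ = q`), or both constraints
are active (`λ² = (qs - r²)/(sδ - c²)`, `ν = (λc - r)/s`), where Slater's condition forces
`c² < sδ`. When `g + νb = 0` the dual value `νc` is only approached as `λ → 0`.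
-/

open Matrix

noncomputable section

namespace Matrix

variable {ι : Type*} [Fintype ι]

lemma IsHermitian.dotProduct_mulVec_comm {H : Matrix ι ι ℝ} (hH : H.IsHermitian)
    (x y : ι → ℝ) : x ⬝ᵥ (H *ᵥ y) = y ⬝ᵥ (H *ᵥ x) := by
  rw [dotProduct_mulVec, ← mulVec_transpose, dotProduct_comm,
    ← conjTranspose_eq_transpose_of_trivial, hH.eq]

variable [DecidableEq ι]

lemma mulVec_nonsing_inv_mulVec {H : Matrix ι ι ℝ} (hdet : IsUnit H.det) (u : ι → ℝ) :
    H *ᵥ (H⁻¹ *ᵥ u) = u := by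
  rw [mulVec_mulVec, mul_nonsing_inv H hdet, one_mulVec]

lemma IsHermitian.dotProduct_mulVec_smul_add_inv_mulVec {H : Matrix ι ι ℝ}
    (hH : H.IsHermitian) (hdet : IsUnit H.det) (t : ℝ) (x u : ι → ℝ) :
    (t • x + H⁻¹ *ᵥ u) ⬝ᵥ (H *ᵥ (t • x + H⁻¹ *ᵥ u))
      = t ^ 2 * (x ⬝ᵥ (H *ᵥ x)) + 2 * t * (u ⬝ᵥ x) + u ⬝ᵥ (H⁻¹ *ᵥ u) := by
  have hcross : (H⁻¹ *ᵥ u) ⬝ᵥ (H *ᵥ x) = u ⬝ᵥ x := by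
    rw [hH.dotProduct_mulVec_comm, mulVec_nonsing_inv_mulVec hdet, dotProduct_comm]
  simp only [mulVec_add, mulVec_smul, mulVec_nonsing_inv_mulVec hdet, add_dotProduct,
    dotProduct_add, smul_dotProduct, dotProduct_smul, smul_eq_mul, hcross,
    dotProduct_comm (H⁻¹ *ᵥ u) u, dotProduct_comm x u]
  ring

lemma PosDef.sq_dotProduct_le {H : Matrix ι ι ℝ} (hH : H.PosDef) (u x : ι → ℝ) :
    (u ⬝ᵥ x) ^ 2 ≤ (u ⬝ᵥ (H⁻¹ *ᵥ u)) * (x ⬝ᵥ (H *ᵥ x)) := by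
  have h := discrim_le_zero (K := ℝ) (a := x ⬝ᵥ (H *ᵥ x)) (b := 2 * (u ⬝ᵥ x))
    (c := u ⬝ᵥ (H⁻¹ *ᵥ u)) fun t => by
      have := hH.posSemidef.dotProduct_mulVec_nonneg (t • x + H⁻¹ *ᵥ u)
      rw [star_trivial, hH.isHermitian.dotProduct_mulVec_smul_add_inv_mulVec
        hH.det_pos.ne'.isUnit] at this
      linarith
  rw [discrim] at h
  linarith

end Matrix

lemma csInf_eq_csSup_of_forall_exists_le_add {P D : Set ℝ} (hP : P.Nonempty)
    (hD : D.Nonempty) (hle : ∀ v ∈ D, ∀ p ∈ P, v ≤ p)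
    (happrox : ∀ ε > 0, ∃ p ∈ P, ∃ v ∈ D, p ≤ v + ε) : sInf P = sSup D := by
  refine le_antisymm (le_of_forall_pos_le_add fun ε hε => ?_)
    (csSup_le hD fun v hv => le_csInf hP (hle v hv))
  obtain ⟨p, hp, v, hv, hpv⟩ := happrox ε hε
  obtain ⟨v₀, hv₀⟩ := hD
  obtain ⟨p₀, hp₀⟩ := hP
  calc sInf P ≤ p := csInf_le ⟨v₀, hle v₀ hv₀⟩ hp
    _ ≤ v + ε := hpv
    _ ≤ sSup D + ε := by gcongr; exact le_csSup ⟨p₀, fun v hv => hle v hv p₀ hp₀⟩ hv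

namespace TrustRegion

lemma exists_multipliers_of_active {q r s c δ lam₀ : ℝ} (hs : 0 < s)
    (hD : 0 < q * s - r ^ 2) (hE : c ^ 2 < s * δ) (hlam₀ : 0 < lam₀) (hq : lam₀ ^ 2 * δ = q)
    (hr : r < lam₀ * c) :
    ∃ lam > 0, ∃ nu ≥ 0, q + 2 * nu * r + nu ^ 2 * s = lam ^ 2 * δ ∧ r + nu * s = lam * c := by
  have hE' : 0 < s * δ - c ^ 2 := sub_pos.2 hE
  obtain ⟨lam, hlam, hlam2⟩ : ∃ lam > 0, lam ^ 2 * (s * δ - c ^ 2) = q * s - r ^ 2 :=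
    ⟨√((q * s - r ^ 2) / (s * δ - c ^ 2)), Real.sqrt_pos.2 (div_pos hD hE'), by
      rw [Real.sq_sqrt (div_pos hD hE').le, div_mul_cancel₀ _ hE'.ne']⟩
  have hsδ : 0 < s * δ := by nlinarith [sq_nonneg c]
  -- `|c λ|` and `|c λ₀|` lie on the same side of `|r|`, so `ν ≥ 0` is inherited from `r < λ₀ c`.
  have hsign : ((c * lam) ^ 2 - r ^ 2) * (s * δ - c ^ 2) = s * δ * ((c * lam₀) ^ 2 - r ^ 2) := by
    linear_combination c ^ 2 * hlam2 - s * c ^ 2 * hq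
  have hle : r ≤ lam * c := by
    rcases lt_or_ge 0 r with hr0 | hr0
    · have hc : 0 < c := by nlinarith
      have h₀ : r ^ 2 < (c * lam₀) ^ 2 := by nlinarith
      have h : r ^ 2 < (c * lam) ^ 2 := by nlinarith [mul_pos hsδ (sub_pos.2 h₀)]
      nlinarith [lt_of_pow_lt_pow_left₀ 2 (by positivity) h]
    rcases le_or_gt 0 c with hc | hc
    · nlinarith
    have h₀ : (c * lam₀) ^ 2 < r ^ 2 := by
      simpa only [neg_sq] using pow_lt_pow_left₀ (by linarith : -(c * lam₀) < -r)
        (by nlinarith) two_ne_zero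
    have h : (c * lam) ^ 2 < r ^ 2 := by nlinarith [mul_pos hsδ (sub_pos.2 h₀)]
    rw [← neg_sq r, ← neg_sq (c * lam)] at h
    nlinarith [lt_of_pow_lt_pow_left₀ 2 (by linarith) h]
  refine ⟨lam, hlam, (lam * c - r) / s, div_nonneg (by linarith) hs.le, ?_, ?_⟩
  · field_simp
    linear_combination -hlam2
  · field_simp
    ring

lemma exists_kkt_multipliers {q r s c δ : ℝ} (hδ : 0 < δ) (hq : 0 < q)
    (hA : ∀ nu, 0 ≤ q + 2 * nu * r + nu ^ 2 * s) (hc : 0 ≤ c → c ^ 2 < s * δ) :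
    (∃ lam > 0, ∃ nu ≥ 0, q + 2 * nu * r + nu ^ 2 * s = lam ^ 2 * δ ∧
        lam * c ≤ r + nu * s ∧ nu * (r + nu * s - lam * c) = 0) ∨
      ∃ nu ≥ 0, q + 2 * nu * r + nu ^ 2 * s = 0 ∧ 0 < s ∧ c ^ 2 ≤ s * δ := by
  obtain ⟨lam₀, hlam₀, hq₀⟩ : ∃ lam₀ > 0, lam₀ ^ 2 * δ = q :=
    ⟨√(q / δ), Real.sqrt_pos.2 (div_pos hq hδ), by
      rw [Real.sq_sqrt (div_pos hq hδ).le, div_mul_cancel₀ _ hδ.ne']⟩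
  -- `λ₀ c ≤ r` says that the minimiser over the trust region alone satisfies `bᵀx + c ≤ 0`.
  rcases le_or_gt (lam₀ * c) r with hr | hr
  · exact Or.inl ⟨lam₀, hlam₀, 0, le_rfl, by simpa using hq₀.symm, by simpa using hr, by simp⟩
  have hrs : r ^ 2 ≤ q * s := by
    have := discrim_le_zero (K := ℝ) (a := s) (b := 2 * r) (c := q) fun nu => by
      linarith [hA nu]
    rw [discrim] at this
    linarith
  have hE : c ^ 2 < s * δ := by
    rcases le_or_gt 0 c with hc0 | hc0
    · exact hc hc0
    have : (c * lam₀) ^ 2 < r ^ 2 := by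
      simpa only [neg_sq] using pow_lt_pow_left₀ (by linarith : -(c * lam₀) < -r)
        (by nlinarith) two_ne_zero
    nlinarith
  have hs : 0 < s := by nlinarith [sq_nonneg c]
  rcases (sub_nonneg.2 hrs).eq_or_lt with hD | hD
  · have hr0 : r ≤ 0 := by
      by_contra! hr0
      have : r ^ 2 < (c * lam₀) ^ 2 := by nlinarith
      nlinarith
    refine Or.inr ⟨-r / s, div_nonneg (by linarith) hs.le, ?_, hs, hE.le⟩
    field_simp
    linear_combination -hD
  · obtain ⟨lam, hlam, nu, hnu, hquad, hlin⟩ :=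
      exists_multipliers_of_active hs hD hE hlam₀ hq₀ hr
    exact Or.inl ⟨lam, hlam, nu, hnu, hquad, hlin.ge, by rw [hlin, sub_self, mul_zero]⟩

variable {ι : Type*} [Fintype ι] [DecidableEq ι] (H : Matrix ι ι ℝ) (g b : ι → ℝ) (c δ : ℝ)

def Feasible (x : ι → ℝ) : Prop :=
  b ⬝ᵥ x + c ≤ 0 ∧ x ⬝ᵥ (H *ᵥ x) ≤ δ

/-- The Lagrange dual function, i.e. the Lagrangian at its minimiser `x = -H⁻¹(g + νb) / λ`. -/
def dual (lam nu : ℝ) : ℝ :=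
  -(1 / (2 * lam)) * ((g ⬝ᵥ (H⁻¹ *ᵥ g)) + 2 * nu * (g ⬝ᵥ (H⁻¹ *ᵥ b))
    + nu ^ 2 * (b ⬝ᵥ (H⁻¹ *ᵥ b))) + nu * c - lam * δ / 2

variable {H g b c δ}

lemma add_smul_dotProduct_inv_mulVec (hH : H.IsHermitian) (nu : ℝ) :
    (g + nu • b) ⬝ᵥ (H⁻¹ *ᵥ (g + nu • b))
      = g ⬝ᵥ (H⁻¹ *ᵥ g) + 2 * nu * (g ⬝ᵥ (H⁻¹ *ᵥ b)) + nu ^ 2 * (b ⬝ᵥ (H⁻¹ *ᵥ b)) := by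
  simp only [mulVec_add, mulVec_smul, dotProduct_add, add_dotProduct, dotProduct_smul,
    smul_dotProduct, smul_eq_mul, hH.inv.dotProduct_mulVec_comm b g]
  ring

lemma sub_dual_eq (hH : H.IsHermitian) (hdet : IsUnit H.det) {lam : ℝ} (hlam : lam ≠ 0)
    (nu : ℝ) (x : ι → ℝ) :
    g ⬝ᵥ x - dual H g b c δ lam nu
      = (lam • x + H⁻¹ *ᵥ (g + nu • b)) ⬝ᵥ (H *ᵥ (lam • x + H⁻¹ *ᵥ (g + nu • b))) / (2 * lam)
        + lam / 2 * (δ - x ⬝ᵥ (H *ᵥ x)) - nu * (b ⬝ᵥ x + c) := by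
  rw [hH.dotProduct_mulVec_smul_add_inv_mulVec hdet, add_smul_dotProduct_inv_mulVec hH, dual,
    add_dotProduct, smul_dotProduct, smul_eq_mul]
  field_simp
  ring

lemma dual_le (hH : H.PosDef) {x : ι → ℝ} (hx : Feasible H b c δ x) {lam nu : ℝ}
    (hlam : 0 < lam) (hnu : 0 ≤ nu) : dual H g b c δ lam nu ≤ g ⬝ᵥ x := by
  rw [← sub_nonneg, sub_dual_eq hH.isHermitian hH.det_pos.ne'.isUnit hlam.ne']
  have hsq := hH.posSemidef.dotProduct_mulVec_nonneg (lam • x + H⁻¹ *ᵥ (g + nu • b))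
  rw [star_trivial] at hsq
  have := div_nonneg hsq (by positivity : (0 : ℝ) ≤ 2 * lam)
  have := mul_nonneg (by positivity : 0 ≤ lam / 2) (sub_nonneg.2 hx.2)
  nlinarith [hx.1]

lemma exists_feasible_eq_dual (hH : H.PosDef) {lam nu : ℝ} (hlam : 0 < lam)
    (hquad : g ⬝ᵥ (H⁻¹ *ᵥ g) + 2 * nu * (g ⬝ᵥ (H⁻¹ *ᵥ b)) + nu ^ 2 * (b ⬝ᵥ (H⁻¹ *ᵥ b))
      = lam ^ 2 * δ)
    (hlin : lam * c ≤ g ⬝ᵥ (H⁻¹ *ᵥ b) + nu * (b ⬝ᵥ (H⁻¹ *ᵥ b)))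
    (hslack : nu * (g ⬝ᵥ (H⁻¹ *ᵥ b) + nu * (b ⬝ᵥ (H⁻¹ *ᵥ b)) - lam * c) = 0) :
    ∃ x, Feasible H b c δ x ∧ g ⬝ᵥ x = dual H g b c δ lam nu := by
  have hdet : IsUnit H.det := hH.det_pos.ne'.isUnit
  set x := (-(1 / lam)) • (H⁻¹ *ᵥ (g + nu • b))
  have hstat : lam • x + H⁻¹ *ᵥ (g + nu • b) = 0 := by
    rw [smul_smul, mul_neg, mul_one_div_cancel hlam.ne', neg_one_smul, neg_add_cancel]
  have hbx : b ⬝ᵥ x = -(g ⬝ᵥ (H⁻¹ *ᵥ b) + nu * (b ⬝ᵥ (H⁻¹ *ᵥ b))) / lam := by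
    simp only [x, dotProduct_smul, mulVec_add, mulVec_smul, dotProduct_add, smul_eq_mul,
      hH.isHermitian.inv.dotProduct_mulVec_comm b g]
    field_simp
  have hxx : x ⬝ᵥ (H *ᵥ x) = δ := by
    rw [mulVec_smul, mulVec_nonsing_inv_mulVec hdet, dotProduct_smul, smul_dotProduct,
      dotProduct_comm, add_smul_dotProduct_inv_mulVec hH.isHermitian, hquad, smul_eq_mul,
      smul_eq_mul]
    field_simp
  refine ⟨x, ⟨?_, hxx.le⟩, ?_⟩
  · rw [hbx, div_add' _ _ _ hlam.ne']
    exact div_nonpos_of_nonpos_of_nonneg (by linarith) hlam.le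
  · rw [← sub_eq_zero, sub_dual_eq hH.isHermitian hdet hlam.ne', hstat, zero_dotProduct, hxx,
      hbx]
    field_simp
    linear_combination 2 * hslack

lemma exists_le_dual_add_of_add_smul_eq_zero (hH : H.IsHermitian) (hdet : IsUnit H.det)
    (hδ : 0 < δ) {nu : ℝ} (hu : g + nu • b = 0) {x : ι → ℝ} (hslack : nu * (b ⬝ᵥ x + c) = 0)
    {ε : ℝ} (hε : 0 < ε) : ∃ lam > 0, g ⬝ᵥ x ≤ dual H g b c δ lam nu + ε := by
  refine ⟨ε / δ, div_pos hε hδ, ?_⟩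
  have hgap : g ⬝ᵥ x - dual H g b c δ (ε / δ) nu = ε / 2 := by
    rw [sub_dual_eq hH hdet (div_pos hε hδ).ne', hu, mulVec_zero, add_zero, mulVec_smul,
      dotProduct_smul, smul_dotProduct, smul_eq_mul, smul_eq_mul, hslack]
    field_simp
    ring
  linarith

lemma exists_feasible_dotProduct_add_eq_zero (hH : H.PosDef) (hs : 0 < b ⬝ᵥ (H⁻¹ *ᵥ b))
    (hc : c ^ 2 ≤ b ⬝ᵥ (H⁻¹ *ᵥ b) * δ) : ∃ x, Feasible H b c δ x ∧ b ⬝ᵥ x + c = 0 := by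
  set x := (-(c / b ⬝ᵥ (H⁻¹ *ᵥ b))) • (H⁻¹ *ᵥ b)
  have hbx : b ⬝ᵥ x + c = 0 := by
    simp only [x, dotProduct_smul, smul_eq_mul]
    field_simp
    ring
  have hxx : x ⬝ᵥ (H *ᵥ x) = c ^ 2 / b ⬝ᵥ (H⁻¹ *ᵥ b) := by
    rw [mulVec_smul, mulVec_nonsing_inv_mulVec hH.det_pos.ne'.isUnit]
    simp only [x, smul_dotProduct, dotProduct_smul, smul_eq_mul, dotProduct_comm (H⁻¹ *ᵥ b) b]
    field_simp
  refine ⟨x, ⟨hbx.le, ?_⟩, hbx⟩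
  rw [hxx, div_le_iff₀ hs]
  linarith

lemma sq_lt_of_strictly_feasible (hH : H.PosDef) {x₀ : ι → ℝ} (hb : b ⬝ᵥ x₀ + c < 0)
    (hH₀ : x₀ ⬝ᵥ (H *ᵥ x₀) < δ) (hc : 0 ≤ c) : c ^ 2 < b ⬝ᵥ (H⁻¹ *ᵥ b) * δ := by
  have hcs := hH.sq_dotProduct_le b x₀
  have hs : 0 ≤ b ⬝ᵥ (H⁻¹ *ᵥ b) := by
    simpa using hH.inv.posSemidef.dotProduct_mulVec_nonneg b
  nlinarith

lemma exists_feasible_le_dual_add (hH : H.PosDef) (hδ : 0 < δ) {x₀ : ι → ℝ}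
    (hb : b ⬝ᵥ x₀ + c < 0) (hH₀ : x₀ ⬝ᵥ (H *ᵥ x₀) < δ) {ε : ℝ} (hε : 0 < ε) :
    ∃ x, Feasible H b c δ x ∧ ∃ lam > 0, ∃ nu ≥ 0, g ⬝ᵥ x ≤ dual H g b c δ lam nu + ε := by
  have hdet : IsUnit H.det := hH.det_pos.ne'.isUnit
  by_cases hg : g = 0
  · obtain ⟨lam, hlam, h⟩ := exists_le_dual_add_of_add_smul_eq_zero (δ := δ) (x := x₀)
      hH.isHermitian hdet hδ (by simp [hg] : g + (0 : ℝ) • b = 0) (zero_mul _) hε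
    exact ⟨x₀, ⟨hb.le, hH₀.le⟩, lam, hlam, 0, le_rfl, h⟩
  have hq : 0 < g ⬝ᵥ (H⁻¹ *ᵥ g) := by simpa using hH.inv.dotProduct_mulVec_pos hg
  have hquad (nu : ℝ) := add_smul_dotProduct_inv_mulVec (g := g) (b := b) hH.isHermitian nu
  have hA (nu : ℝ) :
      0 ≤ g ⬝ᵥ (H⁻¹ *ᵥ g) + 2 * nu * (g ⬝ᵥ (H⁻¹ *ᵥ b)) + nu ^ 2 * (b ⬝ᵥ (H⁻¹ *ᵥ b)) := by
    rw [← hquad nu]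
    simpa using hH.inv.posSemidef.dotProduct_mulVec_nonneg (g + nu • b)
  rcases exists_kkt_multipliers hδ hq hA (sq_lt_of_strictly_feasible hH hb hH₀) with
    ⟨lam, hlam, nu, hnu, hquad', hlin, hslack⟩ | ⟨nu, hnu, hA₀, hs, hc⟩
  · obtain ⟨x, hx, hgx⟩ := exists_feasible_eq_dual hH hlam hquad' hlin hslack
    exact ⟨x, hx, lam, hlam, nu, hnu, hgx.le.trans (le_add_of_nonneg_right hε.le)⟩
  · have hu : g + nu • b = 0 := by
      by_contra hu
      have := hH.inv.dotProduct_mulVec_pos hu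
      rw [star_trivial, hquad, hA₀] at this
      exact this.false
    obtain ⟨x, hx, hbx⟩ := exists_feasible_dotProduct_add_eq_zero hH hs hc
    obtain ⟨lam, hlam, h⟩ := exists_le_dual_add_of_add_smul_eq_zero hH.isHermitian hdet hδ hu
      (by rw [hbx, mul_zero]) hε
    exact ⟨x, hx, lam, hlam, nu, hnu, h⟩

end TrustRegion

/-- **Strong duality for a linear objective under a linear constraint and a quadratic
trust-region constraint.** With `q = gᵀH⁻¹g`, `r = gᵀH⁻¹b`, `s = bᵀH⁻¹b`, if there is a
strictly feasible point then
`min {gᵀx : bᵀx + c ≤ 0, xᵀHx ≤ δ} = max_{λ ≥ 0, ν ≥ 0} [-(1/(2λ))(q + 2νr + ν²s) + νc - λδ/2]`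
(the supremum over the dual variables, with `λ = 0` understood as the limiting value,
i.e. taken over `λ > 0`). -/
theorem lqclp_strong_duality
    (n : ℕ) (g b : Fin n → ℝ) (c δ : ℝ) (hδ : 0 < δ)
    (H : Matrix (Fin n) (Fin n) ℝ) (hH : H.PosDef)
    (hfeas : ∃ x : Fin n → ℝ, b ⬝ᵥ x + c < 0 ∧ x ⬝ᵥ (H *ᵥ x) < δ) :
    sInf {p : ℝ | ∃ x : Fin n → ℝ, b ⬝ᵥ x + c ≤ 0 ∧ x ⬝ᵥ (H *ᵥ x) ≤ δ ∧ p = g ⬝ᵥ x}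
      = sSup {v : ℝ | ∃ lam nu : ℝ, 0 < lam ∧ 0 ≤ nu ∧
          v = -(1 / (2 * lam)) * ((g ⬝ᵥ (H⁻¹ *ᵥ g)) + 2 * nu * (g ⬝ᵥ (H⁻¹ *ᵥ b))
                + nu ^ 2 * (b ⬝ᵥ (H⁻¹ *ᵥ b)))
              + nu * c - lam * δ / 2} := by
  obtain ⟨x₀, hb₀, hH₀⟩ := hfeas
  apply csInf_eq_csSup_of_forall_exists_le_add
  · exact ⟨_, x₀, hb₀.le, hH₀.le, rfl⟩
  · exact ⟨_, 1, 0, one_pos, le_rfl, rfl⟩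
  · rintro _ ⟨lam, nu, hlam, hnu, rfl⟩ _ ⟨x, hb, hx, rfl⟩
    exact TrustRegion.dual_le hH ⟨hb, hx⟩ hlam hnu
  · intro ε hε
    obtain ⟨x, hx, lam, hlam, nu, hnu, hle⟩ :=
      TrustRegion.exists_feasible_le_dual_add hH hδ hb₀ hH₀ hε
    exact ⟨_, ⟨x, hx.1, hx.2, rfl⟩, _, ⟨lam, nu, hlam, hnu, rfl⟩, hle⟩
end
end

section
/- (Performance difference identity.) For any two policies π' and π, J(π') - J(π) = (1/(1-γ)) E_{s∼d^{π'}, a∼π'(·|s)}[A^π(s,a)]. -/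
/-!
The discounted occupancy vector satisfies the flow equation
`d^π = (1 - γ) μ + γ P_π d^π` (shift the geometric series by one step; it converges because
`P_π` is column-stochastic). For any `V`, the expected advantage telescopes to
`r_π(s) + γ (P_πᵀ V)(s) - V(s)`, so pairing with the flow equation gives
`E_{d^π}[E_{a∼π} A_V] = (1 - γ) (J(π) - ⟨μ, V⟩)`. When `V` solves the Bellman equation of `π`
the left side vanishes, whence `J(π) = ⟨μ, V⟩`; the same identity for `π'` is the theorem.
-/

open BigOperators Finset Matrix

noncomputable section

variable {S A : Type*}

/-- Policy transition matrix (column-stochastic): entry `(s', s)` is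
`P_pol(s'|s) = ∑ a, P(s'|s,a) pol(a|s)`. -/
def Pmat [Fintype A] (P : S → A → S → ℝ) (pol : S → A → ℝ) : Matrix S S ℝ :=
  fun s' s => ∑ a, P s a s' * pol s a

/-- Discounted future state distribution `d^π = (1-γ) ∑_t γ^t P_π^t μ`. -/
def dFut [Fintype S] [DecidableEq S] [Fintype A] (γ : ℝ) (P : S → A → S → ℝ)
    (μ : S → ℝ) (pol : S → A → ℝ) : S → ℝ :=
  fun s => (1 - γ) * ∑' t : ℕ, γ ^ t * ((Pmat P pol ^ t) *ᵥ μ) s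

/-- Discounted return `J(π)` (also used as the cost return `J_C(π)` with a cost `C`
in place of the reward `R`). -/
def Jret [Fintype S] [DecidableEq S] [Fintype A] (γ : ℝ) (P : S → A → S → ℝ)
    (R : S → A → S → ℝ) (μ : S → ℝ) (pol : S → A → ℝ) : ℝ :=
  (1 / (1 - γ)) * ∑ s, dFut γ P μ pol s * (∑ a, pol s a * (∑ s', P s a s' * R s a s'))

/-- Total variational divergence between action distributions at state `s`. -/
def DTV [Fintype A] (pol' pol : S → A → ℝ) (s : S) : ℝ :=
  (1 / 2) * ∑ a, |pol' s a - pol s a|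

/-- Kullback–Leibler divergence between action distributions at state `s`. -/
def DKL [Fintype A] (pol' pol : S → A → ℝ) (s : S) : ℝ :=
  ∑ a, pol' s a * Real.log (pol' s a / pol s a)

/-- Advantage function `A^π(s,a) = Q^π(s,a) - V^π(s)` built from a value function `V`
(also used for cost advantages with a cost `C` in place of `R`). -/
def Adv [Fintype S] (γ : ℝ) (P : S → A → S → ℝ) (R : S → A → S → ℝ)
    (V : S → ℝ) (s : S) (a : A) : ℝ :=
  (∑ s', P s a s' * (R s a s' + γ * V s')) - V s

/-- `ε_f^{π'} = max_s |E_{a∼π'(·|s), s'∼P}[δ_f(s,a,s')]|` where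
`δ_f(s,a,s') = R(s,a,s') + γ f(s') - f(s)`. -/
def epsF [Fintype S] [Fintype A] (γ : ℝ) (P : S → A → S → ℝ) (R : S → A → S → ℝ)
    (f : S → ℝ) (pol' : S → A → ℝ) : ℝ :=
  ⨆ s, |∑ a, pol' s a * (∑ s', P s a s' * (R s a s' + γ * f s' - f s))|

/-- Surrogate `L_{π,f}(π') = E_{s∼d^π, a∼π, s'∼P}[(π'(a|s)/π(a|s) - 1) δ_f(s,a,s')]`. -/
def Lsurr [Fintype S] [DecidableEq S] [Fintype A] (γ : ℝ) (P : S → A → S → ℝ)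
    (R : S → A → S → ℝ) (μ : S → ℝ) (f : S → ℝ) (pol pol' : S → A → ℝ) : ℝ :=
  ∑ s, dFut γ P μ pol s * (∑ a, pol s a * (∑ s', P s a s' *
    ((pol' s a / pol s a - 1) * (R s a s' + γ * f s' - f s))))

namespace Matrix

variable {n : Type*} [Fintype n] [DecidableEq n] {M : Matrix n n ℝ}

lemma abs_mulVec_le_of_mem_colStochastic (hM : M ∈ colStochastic ℝ n) (x : n → ℝ) (i : n) :
    |(M *ᵥ x) i| ≤ ∑ j, |x j| :=
  calc |(M *ᵥ x) i| ≤ ∑ j, |M i j * x j| := Finset.abs_sum_le_sum_abs _ _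
    _ ≤ ∑ j, |x j| := sum_le_sum fun j _ => by
      rw [abs_mul, abs_of_nonneg (hM.1 i j)]
      exact mul_le_of_le_one_left (abs_nonneg _) (le_one_of_mem_colStochastic hM)

lemma summable_geometric_mul_pow_mulVec_of_mem_colStochastic (hM : M ∈ colStochastic ℝ n)
    {γ : ℝ} (hγ0 : 0 ≤ γ) (hγ1 : γ < 1) (x : n → ℝ) (i : n) :
    Summable fun t : ℕ => γ ^ t * (M ^ t *ᵥ x) i := by
  refine .of_norm_bounded ((summable_geometric_of_lt_one hγ0 hγ1).mul_right (∑ j, |x j|))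
    fun t => ?_
  rw [norm_mul, Real.norm_of_nonneg (pow_nonneg hγ0 t)]
  exact mul_le_mul_of_nonneg_left
    (abs_mulVec_le_of_mem_colStochastic (pow_mem hM t) x i) (pow_nonneg hγ0 t)

lemma tsum_geometric_mul_pow_mulVec_of_mem_colStochastic (hM : M ∈ colStochastic ℝ n)
    {γ : ℝ} (hγ0 : 0 ≤ γ) (hγ1 : γ < 1) (x : n → ℝ) :
    (fun i => ∑' t : ℕ, γ ^ t * (M ^ t *ᵥ x) i)
      = x + γ • M *ᵥ fun i => ∑' t : ℕ, γ ^ t * (M ^ t *ᵥ x) i := by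
  funext i
  have hsum := summable_geometric_mul_pow_mulVec_of_mem_colStochastic hM hγ0 hγ1 x
  have hshift : ∀ t : ℕ, γ ^ (t + 1) * (M ^ (t + 1) *ᵥ x) i
      = γ * ∑ j, M i j * (γ ^ t * (M ^ t *ᵥ x) j) := fun t => by
    rw [pow_succ' M, ← mulVec_mulVec, mulVec, dotProduct, mul_sum, mul_sum]
    exact sum_congr rfl fun j _ => by ring
  rw [(hsum i).tsum_eq_zero_add, tsum_congr hshift, tsum_mul_left,
    Summable.tsum_finsetSum fun j _ => (hsum j).mul_left (M i j)]
  simp only [pow_zero, one_mul, one_mulVec, tsum_mul_left]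
  rfl

end Matrix

section MDP

variable [Fintype S] [Fintype A] {γ : ℝ} {P : S → A → S → ℝ} {pol : S → A → ℝ}

lemma Pmat_mem_colStochastic [DecidableEq S] (hP0 : ∀ s a s', 0 ≤ P s a s')
    (hP1 : ∀ s a, ∑ s', P s a s' = 1) (hpol0 : ∀ s a, 0 ≤ pol s a)
    (hpol1 : ∀ s, ∑ a, pol s a = 1) :
    Pmat P pol ∈ colStochastic ℝ S := by
  refine mem_colStochastic_iff_sum.2
    ⟨fun s' s => sum_nonneg fun a _ => mul_nonneg (hP0 s a s') (hpol0 s a), fun s => ?_⟩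
  simp only [Pmat]
  rw [sum_comm]
  simp only [← sum_mul, hP1, one_mul, hpol1]

lemma dFut_eq_add_mulVec [DecidableEq S] (hγ0 : 0 ≤ γ) (hγ1 : γ < 1) (μ : S → ℝ)
    (hM : Pmat P pol ∈ colStochastic ℝ S) :
    dFut γ P μ pol = (1 - γ) • μ + γ • Pmat P pol *ᵥ dFut γ P μ pol := by
  have hd : dFut γ P μ pol = (1 - γ) • fun s => ∑' t : ℕ, γ ^ t * ((Pmat P pol ^ t) *ᵥ μ) s :=
    rfl
  conv_lhs => rw [hd, tsum_geometric_mul_pow_mulVec_of_mem_colStochastic hM hγ0 hγ1 μ]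
  rw [hd, smul_add, mulVec_smul, smul_comm]

lemma sum_mul_Adv (R : S → A → S → ℝ) (V : S → ℝ) (s : S) (hpol1 : ∑ a, pol s a = 1) :
    ∑ a, pol s a * Adv γ P R V s a
      = ∑ a, pol s a * ∑ s', P s a s' * R s a s' + γ * (V ᵥ* Pmat P pol) s - V s := by
  have hnext : γ * (V ᵥ* Pmat P pol) s = ∑ a, pol s a * ∑ s', P s a s' * (γ * V s') := by
    simp only [vecMul, dotProduct, Pmat, mul_sum]
    rw [sum_comm]
    exact sum_congr rfl fun a _ => sum_congr rfl fun s' _ => by ring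
  simp only [Adv, mul_sub, sum_sub_distrib, ← sum_mul, hpol1, one_mul, hnext, mul_add,
    sum_add_distrib]

lemma sum_mul_Adv_eq_zero {R : S → A → S → ℝ} {V : S → ℝ} {s : S} (hpol1 : ∑ a, pol s a = 1)
    (hV : V s = ∑ a, pol s a * ∑ s', P s a s' * (R s a s' + γ * V s')) :
    ∑ a, pol s a * Adv γ P R V s a = 0 := by
  simp only [Adv, mul_sub, sum_sub_distrib, ← sum_mul, hpol1, one_mul, ← hV, sub_self]

lemma sum_dFut_mul_sum_mul_Adv [DecidableEq S] (hγ0 : 0 ≤ γ) (hγ1 : γ < 1) (μ : S → ℝ)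
    (R : S → A → S → ℝ) (V : S → ℝ) (hM : Pmat P pol ∈ colStochastic ℝ S)
    (hpol1 : ∀ s, ∑ a, pol s a = 1) :
    ∑ s, dFut γ P μ pol s * ∑ a, pol s a * Adv γ P R V s a
      = (1 - γ) * (Jret γ P R μ pol - ∑ s, μ s * V s) := by
  set d := dFut γ P μ pol
  set r := fun s => ∑ a, pol s a * ∑ s', P s a s' * R s a s'
  have hJ : (1 - γ) * Jret γ P R μ pol = d ⬝ᵥ r := by
    rw [Jret, ← mul_assoc, mul_one_div_cancel (by linarith), one_mul]
    rfl
  have hflow : γ • Pmat P pol *ᵥ d - d = -((1 - γ) • μ) := by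
    have hbal : d = (1 - γ) • μ + γ • Pmat P pol *ᵥ d := dFut_eq_add_mulVec hγ0 hγ1 μ hM
    linear_combination (norm := module) -hbal
  calc ∑ s, d s * ∑ a, pol s a * Adv γ P R V s a
      = d ⬝ᵥ (r + γ • (V ᵥ* Pmat P pol) - V) := by
        simp only [sum_mul_Adv R V _ (hpol1 _)]
        rfl
    _ = d ⬝ᵥ r + (γ • Pmat P pol *ᵥ d - d) ⬝ᵥ V := by
        rw [dotProduct_sub, dotProduct_add, dotProduct_smul, dotProduct_comm d (V ᵥ* _),
          ← dotProduct_mulVec, sub_dotProduct, smul_dotProduct, dotProduct_comm V,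
          dotProduct_comm d V, add_sub_assoc]
    _ = (1 - γ) * (Jret γ P R μ pol - ∑ s, μ s * V s) := by
        rw [hflow, ← hJ, neg_dotProduct, smul_dotProduct, dotProduct, smul_eq_mul]
        ring

end MDP

theorem performance_difference_identity_general
    [Fintype S] [DecidableEq S] [Fintype A]
    (γ : ℝ) (hγ0 : 0 ≤ γ) (hγ1 : γ < 1)
    (P : S → A → S → ℝ) (hP0 : ∀ s a s', 0 ≤ P s a s')
    (hP1 : ∀ s a, (∑ s', P s a s') = 1)
    (μ : S → ℝ)
    (R : S → A → S → ℝ)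
    (pol pol' : S → A → ℝ)
    (hpol0 : ∀ s a, 0 ≤ pol s a) (hpol1 : ∀ s, (∑ a, pol s a) = 1)
    (hpol'0 : ∀ s a, 0 ≤ pol' s a) (hpol'1 : ∀ s, (∑ a, pol' s a) = 1)
    (V : S → ℝ)
    (hV : ∀ s, V s = ∑ a, pol s a * (∑ s', P s a s' * (R s a s' + γ * V s'))) :
    Jret γ P R μ pol' - Jret γ P R μ pol
      = (1 / (1 - γ)) * ∑ s, dFut γ P μ pol' s * (∑ a, pol' s a * Adv γ P R V s a) := by
  have hγ : 1 - γ ≠ 0 := by linarith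
  have hJ : Jret γ P R μ pol = ∑ s, μ s * V s := by
    have h := sum_dFut_mul_sum_mul_Adv hγ0 hγ1 μ R V
      (Pmat_mem_colStochastic hP0 hP1 hpol0 hpol1) hpol1
    simp only [sum_mul_Adv_eq_zero (hpol1 _) (hV _), mul_zero, sum_const_zero] at h
    exact sub_eq_zero.1 ((mul_eq_zero.1 h.symm).resolve_left hγ)
  rw [sum_dFut_mul_sum_mul_Adv hγ0 hγ1 μ R V (Pmat_mem_colStochastic hP0 hP1 hpol'0 hpol'1)
    hpol'1, hJ]
  field_simp

/-- **Performance difference identity** (Kakade & Langford):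
`J(π') - J(π) = (1/(1-γ)) E_{s∼d^{π'}, a∼π'}[A^π(s,a)]`. -/
theorem performance_difference_identity
    [Fintype S] [DecidableEq S] [Nonempty S] [Fintype A] [Nonempty A]
    (γ : ℝ) (hγ0 : 0 ≤ γ) (hγ1 : γ < 1)
    (P : S → A → S → ℝ) (hP0 : ∀ s a s', 0 ≤ P s a s')
    (hP1 : ∀ s a, (∑ s', P s a s') = 1)
    (μ : S → ℝ) (hμ0 : ∀ s, 0 ≤ μ s) (hμ1 : (∑ s, μ s) = 1)
    (R : S → A → S → ℝ)
    (pol pol' : S → A → ℝ)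
    (hpol0 : ∀ s a, 0 ≤ pol s a) (hpol1 : ∀ s, (∑ a, pol s a) = 1)
    (hpol'0 : ∀ s a, 0 ≤ pol' s a) (hpol'1 : ∀ s, (∑ a, pol' s a) = 1)
    (V : S → ℝ)
    (hV : ∀ s, V s = ∑ a, pol s a * (∑ s', P s a s' * (R s a s' + γ * V s'))) :
    Jret γ P R μ pol' - Jret γ P R μ pol
      = (1 / (1 - γ)) * ∑ s, dFut γ P μ pol' s * (∑ a, pol' s a * Adv γ P R V s a) :=
  performance_difference_identity_general γ hγ0 hγ1 P hP0 hP1 μ R pol pol' hpol0 hpol1 hpol'0 hpol'1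
    V hV
end
end
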